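/- Let m ≥ 3 be odd and let L_m = P_2 □ P_m be the Cartesian product of the path P_2 with the path P_m (a graph of order 2m). Then the harmonic centralization of L_m equals (4/((m-1)(2m-1)))·[ 2(m-1)·H_{(m-1)/2} - 2·H_{m-1} + 2(m-1)/(m+1) - (m-1)/2 - 1/m - Σ_{j=2}^{(m-1)/2} ( 2·H_{j-1} + 2·H_{m-j} + (1-j)/j + 1/(m-j+1) ) ], where H_n denotes the n-th harmonic number. -/

import Mathlib

open SimpleGraph Finset

/-- The harmonic centrality of a vertex `u` in a graph `G` of order `N`:
`(1/(N-1)) * Σ_{x ≠ u} 1/d(u,x)`, where `1/d(u,x) = 0` when there is no path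
(Mathlib's `SimpleGraph.dist` is `0` for unreachable pairs, and `1/0 = 0` in `ℝ`). -/
noncomputable def harmonicCentrality {V : Type*} [Fintype V] [DecidableEq V]
    (G : SimpleGraph V) (u : V) : ℝ :=
  (∑ x ∈ Finset.univ.erase u, (1 : ℝ) / (G.dist u x)) / ((Fintype.card V : ℝ) - 1)

/-- The harmonic centralization of a graph `G` of order `N`:
`(Σ_u (Hmax - H_G(u))) / ((N-2)/2)` where `Hmax` is the largest harmonic centrality. -/
noncomputable def harmonicCentralization {V : Type*} [Fintype V] [DecidableEq V]
    (G : SimpleGraph V) : ℝ :=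
  (∑ u : V, ((⨆ v : V, harmonicCentrality G v) - harmonicCentrality G u)) /
    (((Fintype.card V : ℝ) - 2) / 2)

/-- The fan graph `F_m`: the join of a hub vertex (`none`) with the path `P_m`. -/
def fanGraph (m : ℕ) : SimpleGraph (Option (Fin m)) :=
  SimpleGraph.fromRel (fun x y =>
    x = none ∨ ∃ a b : Fin m, x = some a ∧ y = some b ∧ (SimpleGraph.pathGraph m).Adj a b)

/-- The direct (tensor) product of two simple graphs. -/
def tensorProd {α β : Type*} (G : SimpleGraph α) (H : SimpleGraph β) :
    SimpleGraph (α × β) where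
  Adj x y := G.Adj x.1 y.1 ∧ H.Adj x.2 y.2
  symm := ⟨fun x y h => ⟨h.1.symm, h.2.symm⟩⟩
  loopless := ⟨fun x h => G.loopless.irrefl x.1 h.1⟩

section HCProof
open SimpleGraph Finset


noncomputable def hr (n : ℕ) : ℝ := ∑ i ∈ Finset.range n, (1:ℝ)/(i+1)
lemma hr_cast (n : ℕ) : ((harmonic n : ℚ) : ℝ) = hr n := by
  unfold harmonic hr; push_cast; simp [one_div]
lemma hr_succ (n : ℕ) : hr (n+1) = hr n + 1/((n:ℝ)+1) := by
  unfold hr; rw [Finset.sum_range_succ]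
lemma hr_zero : hr 0 = 0 := by simp [hr]
lemma sum_hr (n : ℕ) : ∑ i ∈ Finset.range n, hr i = n * hr n - n := by
  induction n with
  | zero => simp [hr_zero]
  | succ k ih => rw [Finset.sum_range_succ, ih, hr_succ]; push_cast; field_simp; ring
lemma reflect_sum (f : ℕ → ℝ) (c : ℕ) :
    ∑ b ∈ Finset.range (c+1), f (c - b) = ∑ b ∈ Finset.range (c+1), f b := by
  apply Finset.sum_nbij' (fun b => c - b) (fun b => c - b) <;>
    simp_all [Finset.mem_range] <;> omega

noncomputable def Sf (c a : ℕ) : ℝ := hr a + hr (2*c-a) + hr (a+1) + hr (2*c+1-a) - 1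

lemma sum_range_add' (f : ℕ → ℝ) (n m : ℕ) :
    ∑ i ∈ Finset.range m, f (n + i)
      = ∑ i ∈ Finset.range (n+m), f i - ∑ i ∈ Finset.range n, f i := by
  rw [Finset.sum_range_add]; ring

lemma sum_Sf (c : ℕ) :
    ∑ a ∈ Finset.range (2*c+1), Sf c a
      = 4 * ((2*c+1) * hr (2*c+1) - (2*c+1)) + 2*hr (2*c+1) - (2*(c:ℝ)+1) := by
  have hQ := sum_hr (2*c+1)
  have T2 : ∑ a ∈ Finset.range (2*c+1), hr (2*c - a) = ∑ a ∈ Finset.range (2*c+1), hr a :=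
    reflect_sum hr (2*c)
  have T3 : ∑ a ∈ Finset.range (2*c+1), hr (a+1)
      = ∑ a ∈ Finset.range (2*c+1), hr a + hr (2*c+1) := by
    have h1 := Finset.sum_range_succ' hr (2*c+1)
    have h2 := Finset.sum_range_succ hr (2*c+1)
    rw [h2] at h1
    rw [hr_zero] at h1
    linarith
  have T4 : ∑ a ∈ Finset.range (2*c+1), hr (2*c+1-a)
      = ∑ a ∈ Finset.range (2*c+1), hr a + hr (2*c+1) := by
    rw [Finset.sum_congr rfl (fun a ha => by
        rw [show 2*c+1-a = (2*c-a)+1 by simp only [Finset.mem_range] at ha; omega] :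
      ∀ a ∈ Finset.range (2*c+1), hr (2*c+1-a) = (fun k => hr (k+1)) (2*c - a))]
    rw [reflect_sum (fun k => hr (k+1)) (2*c)]
    exact T3
  simp only [Sf, Finset.sum_add_distrib, Finset.sum_sub_distrib, Finset.sum_const,
    Finset.card_range, nsmul_eq_mul, mul_one]
  rw [T2, T3, T4, hQ]
  push_cast
  ring



lemma icc_sum (c : ℕ) (hc : 1 ≤ c) :
    ∑ j ∈ Finset.Icc 2 c,
        (2*hr (j-1) + 2*hr (2*c+1-j) + (1-(j:ℝ))/(j:ℝ) + 1/(2*(c:ℝ)+1-(j:ℝ)+1))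
      = 2*((c:ℝ)*hr c - c)
        + 2*((2*(c:ℝ)*hr (2*c) - 2*c) - (((c:ℝ)+1)*hr (c+1) - ((c:ℝ)+1)))
        + (hr c - c) + (hr (2*c) - hr (c+1)) := by
  rw [← Finset.Ico_add_one_right_eq_Icc, Finset.sum_Ico_eq_sum_range]
  rw [show c + 1 - 2 = c - 1 by omega]
  have L1 : ∑ i ∈ Finset.range (c-1), hr (2+i-1) = (c:ℝ)*hr c - c := by
    rw [Finset.sum_congr rfl (fun i _ => by rw [show 2+i-1 = i+1 by omega] :
      ∀ i ∈ Finset.range (c-1), hr (2+i-1) = hr (i+1))]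
    have h1 := Finset.sum_range_succ' hr (c-1)
    rw [show c-1+1 = c by omega, hr_zero] at h1
    rw [← sum_hr c, h1, add_zero]
  have L2 : ∑ i ∈ Finset.range (c-1), hr (2*c+1-(2+i))
      = (2*(c:ℝ)*hr (2*c) - 2*c) - (((c:ℝ)+1)*hr (c+1) - ((c:ℝ)+1)) := by
    have key : ∑ i ∈ Finset.range (c-1), hr (2*c+1-(2+i))
        = ∑ i ∈ Finset.range (c-1), hr (c+1+i) := by
      rcases Nat.lt_or_ge c 2 with h2 | h2
      · rw [show c - 1 = 0 by omega]; simp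
      · obtain ⟨d, rfl⟩ : ∃ d, c = d + 2 := ⟨c - 2, by omega⟩
        rw [show d+2-1 = d+1 by omega]
        rw [Finset.sum_congr rfl (fun i hi => by
            simp only [Finset.mem_range] at hi
            rw [show 2*(d+2)+1-(2+i) = (d+2)+1+(d-i) by omega] :
          ∀ i ∈ Finset.range (d+1), hr (2*(d+2)+1-(2+i)) = (fun k => hr ((d+2)+1+k)) (d - i))]
        rw [reflect_sum (fun k => hr ((d+2)+1+k)) d]
    rw [key, sum_range_add' hr (c+1) (c-1), show c+1+(c-1) = 2*c by omega,
      sum_hr (2*c), sum_hr (c+1)]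
    push_cast
    ring
  have L3 : ∑ i ∈ Finset.range (c-1), (1-((2+i:ℕ):ℝ))/((2+i:ℕ):ℝ)
      = (hr c - 1) - ((c:ℝ) - 1) := by
    have e : ∀ i ∈ Finset.range (c-1), (1-((2+i:ℕ):ℝ))/((2+i:ℕ):ℝ)
        = 1/((i:ℝ)+2) - 1 := by
      intro i _
      have h : ((2+i:ℕ):ℝ) = (i:ℝ)+2 := by push_cast; ring
      rw [h]
      have : (i:ℝ)+2 ≠ 0 := by positivity
      field_simp
    rw [Finset.sum_congr rfl e, Finset.sum_sub_distrib, Finset.sum_const,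
      Finset.card_range, nsmul_eq_mul, mul_one]
    have h1 := Finset.sum_range_succ' (fun k => (1:ℝ)/((k:ℝ)+1)) (c-1)
    rw [show c-1+1 = c by omega] at h1
    have h2 : hr c = ∑ i ∈ Finset.range c, (1:ℝ)/((i:ℝ)+1) := by
      unfold hr; exact Finset.sum_congr rfl (fun i _ => by norm_num)
    rw [h2, h1]
    have e2 : ∀ i ∈ Finset.range (c-1), (1:ℝ)/(((i+1:ℕ):ℝ)+1) = 1/((i:ℝ)+2) := by
      intro i _; push_cast; ring_nf
    rw [Finset.sum_congr rfl e2]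
    have hcc : ((c-1:ℕ):ℝ) = (c:ℝ) - 1 := by
      have : (1:ℕ) ≤ c := hc; push_cast [this]; ring
    rw [hcc]
    norm_num
  have L4 : ∑ i ∈ Finset.range (c-1), (1:ℝ)/(2*(c:ℝ)+1-((2+i:ℕ):ℝ)+1)
      = hr (2*c) - hr (c+1) := by
    have key : ∑ i ∈ Finset.range (c-1), (1:ℝ)/(2*(c:ℝ)+1-((2+i:ℕ):ℝ)+1)
        = ∑ i ∈ Finset.range (c-1), (1:ℝ)/(((c+2+i:ℕ):ℝ)) := by
      rcases Nat.lt_or_ge c 2 with h2 | h2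
      · rw [show c - 1 = 0 by omega]; simp
      · obtain ⟨d, rfl⟩ : ∃ d, c = d + 2 := ⟨c - 2, by omega⟩
        rw [show d+2-1 = d+1 by omega]
        rw [Finset.sum_congr rfl (fun i hi => by
            simp only [Finset.mem_range] at hi
            have e : (2*(((d+2:ℕ)):ℝ)+1-((2+i:ℕ):ℝ)+1) = (((d+2)+2+(d-i):ℕ):ℝ) := by
              push_cast [show d - i + i = d by omega]
              have : ((d-i:ℕ):ℝ) = (d:ℝ) - i := by
                have hle : i ≤ d := by omega
                push_cast [hle]; ring
              rw [this]; ring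
            rw [e] :
          ∀ i ∈ Finset.range (d+1), (1:ℝ)/(2*(((d+2:ℕ)):ℝ)+1-((2+i:ℕ):ℝ)+1)
            = (fun k => (1:ℝ)/(((d+2)+2+k:ℕ):ℝ)) (d - i))]
        rw [reflect_sum (fun k => (1:ℝ)/(((d+2)+2+k:ℕ):ℝ)) d]
    rw [key]
    have h2 : ∀ n : ℕ, hr n = ∑ i ∈ Finset.range n, (1:ℝ)/((i:ℝ)+1) :=
      fun n => Finset.sum_congr rfl (fun i _ => by norm_num)
    rw [h2, h2]
    have := sum_range_add' (fun k => (1:ℝ)/((k:ℝ)+1)) (c+1) (c-1)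
    rw [show c+1+(c-1) = 2*c by omega] at this
    rw [← this]
    exact Finset.sum_congr rfl (fun i _ => by push_cast; ring_nf)
  calc ∑ i ∈ Finset.range (c-1),
        (2*hr (2+i-1) + 2*hr (2*c+1-(2+i)) + (1-((2+i:ℕ):ℝ))/((2+i:ℕ):ℝ)
          + 1/(2*(c:ℝ)+1-((2+i:ℕ):ℝ)+1))
      = 2*(∑ i ∈ Finset.range (c-1), hr (2+i-1))
        + 2*(∑ i ∈ Finset.range (c-1), hr (2*c+1-(2+i)))
        + (∑ i ∈ Finset.range (c-1), (1-((2+i:ℕ):ℝ))/((2+i:ℕ):ℝ))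
        + ∑ i ∈ Finset.range (c-1), (1:ℝ)/(2*(c:ℝ)+1-((2+i:ℕ):ℝ)+1) := by
        simp only [Finset.sum_add_distrib, Finset.mul_sum]
    _ = _ := by rw [L1, L2, L3, L4]; ring



lemma path_walk_lb {n : ℕ} {i j : Fin n} (w : (pathGraph n).Walk i j) :
    Nat.dist i.val j.val ≤ w.length := by
  induction w with
  | nil => simp [Nat.dist_self]
  | @cons u v x h' p' ih =>
    have hadj : Nat.dist u.val v.val = 1 := by
      rw [pathGraph_adj] at h'
      rcases h' with h' | h'
      · rw [Nat.dist_eq_sub_of_le (by omega)]; omega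
      · rw [Nat.dist_eq_sub_of_le_right (by omega)]; omega
    calc Nat.dist u.val x.val ≤ Nat.dist u.val v.val + Nat.dist v.val x.val :=
          Nat.dist.triangle_inequality _ _ _
      _ ≤ 1 + p'.length := by rw [hadj]; exact Nat.add_le_add_left ih 1
      _ = (SimpleGraph.Walk.cons h' p').length := by
          rw [SimpleGraph.Walk.length_cons]; omega

lemma path_walk_ub {n : ℕ} : ∀ (L : ℕ) (i j : Fin n), j.val = i.val + L →
    ∃ w : (pathGraph n).Walk i j, w.length = L := by
  intro L
  induction L with
  | zero => intro i j h; have : i = j := Fin.ext (by omega); subst this; exact ⟨.nil, rfl⟩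
  | succ k ih =>
    intro i j h
    have hi : i.val + 1 < n := by omega
    set i' : Fin n := ⟨i.val + 1, hi⟩ with hi'
    have hadj : (pathGraph n).Adj i i' := by rw [pathGraph_adj]; left; rfl
    obtain ⟨w, hw⟩ := ih i' j (by simp [hi']; omega)
    exact ⟨.cons hadj w, by simp [hw]⟩

lemma path_dist {n : ℕ} (i j : Fin n) :
    (pathGraph n).dist i j = Nat.dist i.val j.val := by
  have hub : ∃ w : (pathGraph n).Walk i j, w.length = Nat.dist i.val j.val := by
    rcases le_total i.val j.val with h | h
    · rw [Nat.dist_eq_sub_of_le h]; exact path_walk_ub _ i j (by omega)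
    · rw [Nat.dist_eq_sub_of_le_right h]
      obtain ⟨w, hw⟩ := path_walk_ub (i.val - j.val) j i (by omega)
      exact ⟨w.reverse, by simp [hw]⟩
  obtain ⟨w, hw⟩ := hub
  refine le_antisymm (hw ▸ SimpleGraph.dist_le w) ?_
  obtain ⟨w', hw'⟩ := SimpleGraph.Reachable.exists_walk_length_eq_dist ⟨w⟩
  rw [← hw']
  exact path_walk_lb w'

lemma boxProd_dist {α β : Type*} {G : SimpleGraph α} {H : SimpleGraph β}
    (hG : G.Connected) (hH : H.Connected) (x y : α × β) :
    (G □ H).dist x y = G.dist x.1 y.1 + H.dist x.2 y.2 := by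
  refine le_antisymm ?_ ?_
  · obtain ⟨wg, hwg⟩ := hG.exists_walk_length_eq_dist x.1 y.1
    obtain ⟨wh, hwh⟩ := hH.exists_walk_length_eq_dist x.2 y.2
    let w := (wg.boxProdLeft H x.2).append (wh.boxProdRight G y.1)
    have hw : w.length = G.dist x.1 y.1 + H.dist x.2 y.2 := by
      simp only [w, SimpleGraph.Walk.length_append]
      simp only [w, SimpleGraph.Walk.length_append, SimpleGraph.Walk.boxProdLeft,
        SimpleGraph.Walk.boxProdRight, SimpleGraph.Walk.length_map, hwg, hwh]
      exact congrArg₂ (· + ·) ((SimpleGraph.Walk.length_map _ _).trans hwg)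
        ((SimpleGraph.Walk.length_map _ _).trans hwh)
    calc (G □ H).dist (x.1, x.2) (y.1, y.2) ≤ w.length := SimpleGraph.dist_le w
      _ = _ := hw
  · have hreach : (G □ H).Reachable x y := by
      have := ((hG.boxProd hH).preconnected x y)
      exact this
    obtain ⟨w, hw⟩ := hreach.exists_walk_length_eq_dist
    rw [← hw]
    clear hw hreach
    induction w with
    | nil => simp
    | @cons u v z h' p' ih =>
      rw [SimpleGraph.boxProd_adj] at h'
      rw [SimpleGraph.Walk.length_cons]
      rcases h' with ⟨ha, he⟩ | ⟨ha, he⟩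
      · have h1 : G.dist u.1 z.1 ≤ 1 + G.dist v.1 z.1 := by
          calc G.dist u.1 z.1 ≤ G.dist u.1 v.1 + G.dist v.1 z.1 := hG.dist_triangle
            _ = 1 + G.dist v.1 z.1 := by rw [SimpleGraph.dist_eq_one_iff_adj.mpr ha]
        have h2 : H.dist u.2 z.2 = H.dist v.2 z.2 := by rw [he]
        omega
      · have h1 : H.dist u.2 z.2 ≤ 1 + H.dist v.2 z.2 := by
          calc H.dist u.2 z.2 ≤ H.dist u.2 v.2 + H.dist v.2 z.2 := hH.dist_triangle
            _ = 1 + H.dist v.2 z.2 := by rw [SimpleGraph.dist_eq_one_iff_adj.mpr ha]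
        have h2 : G.dist u.1 z.1 = G.dist v.1 z.1 := by rw [he]
        omega



lemma sum_inv_dist (m a : ℕ) (ha : a < m) :
    ∑ b ∈ Finset.range m, (1:ℝ)/(Nat.dist a b) = hr a + hr (m-1-a) := by
  rw [Finset.range_eq_Ico, ← Finset.sum_Ico_consecutive _ (Nat.zero_le (a+1)) (by omega : a+1 ≤ m)]
  have h1 : ∑ b ∈ Finset.Ico 0 (a+1), (1:ℝ)/(Nat.dist a b) = hr a := by
    rw [← Finset.range_eq_Ico]
    rw [Finset.sum_congr rfl (fun b hb => by
      simp only [Finset.mem_range] at hb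
      rw [Nat.dist_eq_sub_of_le_right (by omega : b ≤ a)] :
      ∀ b ∈ Finset.range (a+1), (1:ℝ)/(Nat.dist a b) = (fun k => (1:ℝ)/(k:ℕ)) (a - b))]
    rw [reflect_sum (fun k => (1:ℝ)/(k:ℕ)) a]
    rw [Finset.sum_range_succ']
    simp [hr]
  have h2 : ∑ b ∈ Finset.Ico (a+1) m, (1:ℝ)/(Nat.dist a b) = hr (m-1-a) := by
    rw [Finset.sum_Ico_eq_sum_range]
    rw [Finset.sum_congr rfl (fun i hi => by
      simp only [Finset.mem_range] at hi
      rw [Nat.dist_eq_sub_of_le (by omega : a ≤ a+1+i)]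
      have e : a + 1 + i - a = i + 1 := by omega
      rw [e]; push_cast; ring :
      ∀ i ∈ Finset.range (m-(a+1)), (1:ℝ)/(Nat.dist a (a+1+i)) = 1/((i:ℝ)+1))]
    have e : m - 1 - a = m - (a+1) := by omega
    rw [e]; rfl
  rw [h1, h2]

lemma sum_inv_dist1 (m a : ℕ) (ha : a < m) :
    ∑ b ∈ Finset.range m, (1:ℝ)/(Nat.dist a b + 1) = hr (a+1) + hr (m-a) - 1 := by
  rw [Finset.range_eq_Ico, ← Finset.sum_Ico_consecutive _ (Nat.zero_le (a+1)) (by omega : a+1 ≤ m)]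
  have h1 : ∑ b ∈ Finset.Ico 0 (a+1), (1:ℝ)/(Nat.dist a b + 1) = hr (a+1) := by
    rw [← Finset.range_eq_Ico]
    rw [Finset.sum_congr rfl (fun b hb => by
      simp only [Finset.mem_range] at hb
      rw [Nat.dist_eq_sub_of_le_right (by omega : b ≤ a)] :
      ∀ b ∈ Finset.range (a+1), (1:ℝ)/(Nat.dist a b + 1) = (fun k => (1:ℝ)/((k:ℕ)+1)) (a - b))]
    rw [reflect_sum (fun k => (1:ℝ)/((k:ℕ)+1)) a]
    rfl
  have h2 : ∑ b ∈ Finset.Ico (a+1) m, (1:ℝ)/(Nat.dist a b + 1) = hr (m-a) - 1 := by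
    rw [Finset.sum_Ico_eq_sum_range]
    rw [Finset.sum_congr rfl (fun i hi => by
      simp only [Finset.mem_range] at hi
      rw [Nat.dist_eq_sub_of_le (by omega : a ≤ a+1+i)]
      have e : a + 1 + i - a = i + 1 := by omega
      rw [e]; push_cast; ring :
      ∀ i ∈ Finset.range (m-(a+1)), (1:ℝ)/(Nat.dist a (a+1+i) + 1) = 1/((i:ℝ)+2))]
    have e : m - a = (m - (a+1)) + 1 := by omega
    rw [e]
    unfold hr
    rw [Finset.sum_range_succ']
    rw [Finset.sum_congr rfl (fun i hi => by push_cast; ring :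
      ∀ i ∈ Finset.range (m-(a+1)), (1:ℝ)/((i:ℝ)+2) = 1/((((i:ℕ)+1:ℕ):ℝ)+1))]
    push_cast
    ring
  rw [h1, h2]; ring



lemma ladder_dist {m : ℕ} (hm : 1 ≤ m) (x y : Fin 2 × Fin m) :
    ((pathGraph 2).boxProd (pathGraph m)).dist x y
      = Nat.dist x.1.val y.1.val + Nat.dist x.2.val y.2.val := by
  obtain ⟨m', rfl⟩ : ∃ m', m = m' + 1 := ⟨m - 1, by omega⟩
  rw [boxProd_dist (by simpa using pathGraph_connected 1) (pathGraph_connected m'),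
    path_dist, path_dist]

lemma centrality_eq (m : ℕ) (hm : 1 ≤ m) (u : Fin 2 × Fin m) :
    harmonicCentrality ((pathGraph 2).boxProd (pathGraph m)) u
      = (hr u.2.val + hr (m-1-u.2.val) + hr (u.2.val+1) + hr (m-u.2.val) - 1)
          / (2*(m:ℝ) - 1) := by
  obtain ⟨u1, u2⟩ := u
  unfold harmonicCentrality
  have hcard : (Fintype.card (Fin 2 × Fin m) : ℝ) = 2*(m:ℝ) := by
    rw [Fintype.card_prod, Fintype.card_fin, Fintype.card_fin]; push_cast; ring
  rw [hcard]
  congr 1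
  rw [Finset.sum_erase _ (by
    rw [ladder_dist hm]
    simp [Nat.dist_self])]
  rw [Fintype.sum_prod_type]
  have hdist : ∀ (j : Fin 2) (b : Fin m),
      ((((pathGraph 2).boxProd (pathGraph m)).dist (u1,u2) (j,b) : ℕ) : ℝ)
        = ((Nat.dist u1.val j.val + Nat.dist u2.val b.val : ℕ) : ℝ) := by
    intro j b; rw [ladder_dist hm]
  rw [Fin.sum_univ_two]
  have hsum0 : ∀ (j : Fin 2), u1 = j →
      ∑ b : Fin m, (1:ℝ) / (((pathGraph 2).boxProd (pathGraph m)).dist (u1,u2) (j,b)) =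
        hr u2.val + hr (m-1-u2.val) := by
    intro j hj
    subst hj
    have e1 : ∑ b : Fin m, (1:ℝ) / (((pathGraph 2).boxProd (pathGraph m)).dist (u1,u2) (u1,b)) =
        ∑ b : Fin m, (1:ℝ)/((Nat.dist u2.val b.val : ℕ) : ℝ) :=
      Finset.sum_congr rfl (fun b _ => by rw [hdist u1 b, Nat.dist_self, zero_add])
    rw [e1, Fin.sum_univ_eq_sum_range (fun i => (1:ℝ)/((Nat.dist u2.val i : ℕ) : ℝ)) m]
    exact sum_inv_dist m u2.val u2.isLt
  have hsum1 : ∀ (j : Fin 2), Nat.dist u1.val j.val = 1 →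
      ∑ b : Fin m, (1:ℝ) / (((pathGraph 2).boxProd (pathGraph m)).dist (u1,u2) (j,b)) =
        hr (u2.val+1) + hr (m-u2.val) - 1 := by
    intro j hj
    have e1 : ∑ b : Fin m, (1:ℝ) / (((pathGraph 2).boxProd (pathGraph m)).dist (u1,u2) (j,b)) =
        ∑ b : Fin m, (1:ℝ)/(((Nat.dist u2.val b.val : ℕ) : ℝ) + 1) :=
      Finset.sum_congr rfl (fun b _ => by
        rw [hdist j b, hj]; push_cast; rw [add_comm (1:ℝ)])
    rw [e1, Fin.sum_univ_eq_sum_range (fun i => (1:ℝ)/(((Nat.dist u2.val i : ℕ) : ℝ) + 1)) m]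
    exact sum_inv_dist1 m u2.val u2.isLt
  fin_cases u1
  · rw [hsum0 0 rfl, hsum1 1 rfl]; ring
  · rw [hsum0 1 rfl, hsum1 0 rfl]; ring




end HCProof

lemma Sf_step (c a : ℕ) (h : a < c) : Sf c a ≤ Sf c (a+1) := by
  have e1 : 2*c - a = (2*c - (a+1)) + 1 := by omega
  have e2 : 2*c+1-a = (2*c - (a+1)) + 2 := by omega
  have e3 : 2*c+1-(a+1) = (2*c-(a+1)) + 1 := by omega
  set k := 2*c - (a+1) with hk
  have hak : a + 1 ≤ k := by omega
  unfold Sf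
  rw [e1, e2, e3]
  rw [show k+2 = (k+1)+1 from rfl, show a+2 = (a+1)+1 from rfl] -- no-op
  rw [hr_succ k, hr_succ (k+1), hr_succ (a+1), hr_succ a]
  have hakr : (a:ℝ) + 1 ≤ (k:ℝ) := by exact_mod_cast hak
  have h1 : 1/((k:ℝ)+1) ≤ 1/((a:ℝ)+1) := by
    apply one_div_le_one_div_of_le (by positivity) (by linarith)
  have h2 : 1/(((k:ℕ):ℝ)+1+1) ≤ 1/(((a:ℕ):ℝ)+1+1) := by
    apply one_div_le_one_div_of_le (by positivity) (by linarith)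
  have hs : hr (2*c - (a+1)) = hr k := by rw [hk]
  have hs2 := hr_succ k
  push_cast at *
  linarith
lemma Sf_symm (c a : ℕ) (ha : a ≤ 2*c) : Sf c (2*c - a) = Sf c a := by
  unfold Sf
  rw [show 2*c - (2*c - a) = a by omega, show 2*c+1-(2*c-a) = a+1 by omega,
    show 2*c - a + 1 = 2*c+1-a by omega]
  ring

lemma Sf_max (c : ℕ) (a : ℕ) (ha : a ≤ 2*c) : Sf c a ≤ Sf c c := by
  have mono : ∀ k, k ≤ c → Sf c (c - k) ≤ Sf c c := by
    intro k
    induction k with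
    | zero => simp
    | succ n ih =>
      intro hn
      have h1 : Sf c (c - (n+1)) ≤ Sf c (c - (n+1) + 1) := Sf_step c _ (by omega)
      have e : c - (n+1) + 1 = c - n := by omega
      rw [e] at h1
      exact h1.trans (ih (by omega))
  rcases le_or_gt a c with h | h
  · have := mono (c - a) (by omega)
    rwa [show c - (c - a) = a by omega] at this
  · have := mono (c - (2*c - a)) (by omega)
    rw [show c - (c - (2*c-a)) = 2*c - a by omega] at this
    rwa [Sf_symm c a ha] at this


/-- Theorem 3.4 (odd case): harmonic centralization of the ladder `P₂ □ Pₘ` for odd `m`. -/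
theorem harmonicCentralization_boxProd_path_path_odd (m : ℕ) (hm : 3 ≤ m) (hodd : Odd m) :
    harmonicCentralization ((SimpleGraph.pathGraph 2).boxProd (SimpleGraph.pathGraph m)) =
      (4 / (((m : ℝ) - 1) * (2 * (m : ℝ) - 1))) *
        (2 * ((m : ℝ) - 1) * (harmonic ((m - 1) / 2) : ℝ) - 2 * (harmonic (m - 1) : ℝ)
          + 2 * ((m : ℝ) - 1) / ((m : ℝ) + 1) - ((m : ℝ) - 1) / 2 - 1 / (m : ℝ)
          - ∑ j ∈ Finset.Icc 2 ((m - 1) / 2),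
              (2 * (harmonic (j - 1) : ℝ) + 2 * (harmonic (m - j) : ℝ)
                + (1 - (j : ℝ)) / (j : ℝ) + 1 / ((m : ℝ) - (j : ℝ) + 1))) := by
  classical
  obtain ⟨c, hc1, rfl⟩ : ∃ c, 1 ≤ c ∧ m = 2*c+1 := by
    obtain ⟨k, hk⟩ := hodd; exact ⟨k, by omega, by omega⟩
  have hc1r : (1:ℝ) ≤ (c:ℝ) := by exact_mod_cast hc1
  have hcent : ∀ u : Fin 2 × Fin (2*c+1),
      harmonicCentrality ((SimpleGraph.pathGraph 2).boxProd (SimpleGraph.pathGraph (2*c+1))) u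
        = Sf c u.2.val / (4*(c:ℝ)+1) := by
    intro u
    rw [centrality_eq (2*c+1) (by omega) u]
    rw [show 2*c+1-1-u.2.val = 2*c - u.2.val by omega]
    unfold Sf
    congr 1
    push_cast
    ring
  have hmax : ∀ u : Fin 2 × Fin (2*c+1),
      harmonicCentrality ((SimpleGraph.pathGraph 2).boxProd (SimpleGraph.pathGraph (2*c+1))) u
        ≤ Sf c c / (4*(c:ℝ)+1) := by
    intro u
    rw [hcent u]
    have h1 : Sf c u.2.val ≤ Sf c c := Sf_max c u.2.val (by have := u.2.isLt; omega)
    have h2 : (0:ℝ) < 4*(c:ℝ)+1 := by linarith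
    exact div_le_div_of_nonneg_right h1 h2.le |>.trans_eq rfl
  have hsup : (⨆ v, harmonicCentrality
        ((SimpleGraph.pathGraph 2).boxProd (SimpleGraph.pathGraph (2*c+1))) v)
      = Sf c c / (4*(c:ℝ)+1) := by
    apply le_antisymm (ciSup_le hmax)
    have hle := le_ciSup (f := fun v => harmonicCentrality
        ((SimpleGraph.pathGraph 2).boxProd (SimpleGraph.pathGraph (2*c+1))) v)
      (Set.Finite.bddAbove (Set.finite_range _))
      ((⟨0, ⟨c, by omega⟩⟩ : Fin 2 × Fin (2*c+1)))
    rwa [hcent] at hle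
  unfold harmonicCentralization
  rw [hsup]
  have hcard : ((Fintype.card (Fin 2 × Fin (2*c+1)) : ℝ) - 2)/2 = 2*(c:ℝ) := by
    rw [Fintype.card_prod, Fintype.card_fin, Fintype.card_fin]; push_cast; ring
  rw [hcard]
  have hsum : ∑ u : Fin 2 × Fin (2*c+1), (Sf c c / (4*(c:ℝ)+1) - harmonicCentrality
        ((SimpleGraph.pathGraph 2).boxProd (SimpleGraph.pathGraph (2*c+1))) u)
      = 2 * (((2*(c:ℝ)+1)*Sf c c - ∑ a ∈ Finset.range (2*c+1), Sf c a)/(4*(c:ℝ)+1)) := by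
    rw [Fintype.sum_prod_type, Fin.sum_univ_two]
    have hone : ∀ j : Fin 2, ∑ b : Fin (2*c+1), (Sf c c / (4*(c:ℝ)+1) - harmonicCentrality
          ((SimpleGraph.pathGraph 2).boxProd (SimpleGraph.pathGraph (2*c+1))) (j, b))
        = ((2*(c:ℝ)+1)*Sf c c - ∑ a ∈ Finset.range (2*c+1), Sf c a)/(4*(c:ℝ)+1) := by
      intro j
      have e1 : ∀ b : Fin (2*c+1), (Sf c c / (4*(c:ℝ)+1) - harmonicCentrality
            ((SimpleGraph.pathGraph 2).boxProd (SimpleGraph.pathGraph (2*c+1))) (j, b))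
          = (Sf c c - Sf c b.val)/(4*(c:ℝ)+1) := by
        intro b
        rw [hcent (j, b), div_sub_div_same]
      rw [Finset.sum_congr rfl (fun b _ => e1 b)]
      rw [Fin.sum_univ_eq_sum_range (fun a => (Sf c c - Sf c a)/(4*(c:ℝ)+1)) (2*c+1)]
      rw [← Finset.sum_div, Finset.sum_sub_distrib, Finset.sum_const, Finset.card_range,
        nsmul_eq_mul]
      push_cast
      ring_nf
    rw [hone 0, hone 1]
    ring
  rw [hsum, sum_Sf c]
  rw [show (2*c+1-1)/2 = c by omega, show 2*c+1-1 = 2*c by omega]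
  rw [hr_cast, hr_cast]
  have hIccEq : ∑ j ∈ Finset.Icc 2 c,
        (2 * (harmonic (j - 1) : ℝ) + 2 * (harmonic (2*c+1 - j) : ℝ)
          + (1 - (j : ℝ)) / (j : ℝ) + 1 / (((2*c+1 : ℕ) : ℝ) - (j : ℝ) + 1))
      = ∑ j ∈ Finset.Icc 2 c,
        (2*hr (j-1) + 2*hr (2*c+1-j) + (1-(j:ℝ))/(j:ℝ) + 1/(2*(c:ℝ)+1-(j:ℝ)+1)) := by
    refine Finset.sum_congr rfl (fun j _ => ?_)
    rw [hr_cast, hr_cast]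
    push_cast
    ring
  rw [hIccEq, icc_sum c hc1]
  have hSfc : Sf c c = 2*hr c + 2*hr (c+1) - 1 := by
    unfold Sf; rw [show 2*c-c = c by omega, show 2*c+1-c = c+1 by omega]; ring
  rw [hSfc, hr_succ (2*c), hr_succ c]
  have h1 : (0:ℝ) < 4*(c:ℝ)+1 := by linarith
  have h2 : (0:ℝ) < 2*(c:ℝ) := by linarith
  have h3 : (0:ℝ) < (c:ℝ)+1 := by linarith
  have h4 : (0:ℝ) < 2*(c:ℝ)+1 := by linarith
  have h5 : (((2*c+1:ℕ)):ℝ) = 2*(c:ℝ)+1 := by push_cast; ring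
  rw [h5]
  have hu0 : (0:ℝ) < (c:ℝ) := by linarith
  have hP : ((c:ℝ)*4 + (c:ℝ)^2*32 + (c:ℝ)^3*84 + (c:ℝ)^4*88 + (c:ℝ)^5*32) ≠ 0 := by positivity
  push_cast
  field_simp
  ring_nf
  rw [← sub_eq_zero]
  field_simp [hP]
  ring
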